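/- arXiv:2303.13901 — 4 statements merged into one kernel-verified Lean document; each statement's English description precedes it below -/
import Mathlib

section
/- Let n ≥ 1, κ > 0, let μ0 be a compactly supported Borel probability measure on ℝ^n absolutely continuous with respect to Lebesgue measure, μ1 a compactly supported Borel probability measure, and let (v0, α0, μ1^⊥) be the HK logarithmic map components of μ1 at μ0. Then the mean growth rate satisfies ∫ α0 dμ0 = −HK_κ²(μ0,μ1)/κ². -/
open MeasureTheory ENNReal Filter Topology RealInnerProductSpace
open scoped Classical

noncomputable section

abbrev Eucl (n : ℕ) : Type := EuclideanSpace ℝ (Fin n)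

/-- Truncated cosine `Cos`. -/
def truncCos (s : ℝ) : ℝ := Real.cos (min |s| (Real.pi / 2))

/-- The Hellinger–Kantorovich cost function `c_κ`. -/
def cHK {n : ℕ} (κ : ℝ) (x y : Eucl n) : ℝ≥0∞ :=
  if dist x y < κ * Real.pi / 2 then
    ENNReal.ofReal (-2 * κ ^ 2 * Real.log (Real.cos (dist x y / κ)))
  else ⊤

/-- Kullback–Leibler divergence `KL(ρ|μ)`. -/
def KLdiv {α : Type*} [MeasurableSpace α] (ρ μ : Measure α) : ℝ≥0∞ :=
  if ρ ≪ μ then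
    ∫⁻ x, ENNReal.ofReal ((ρ.rnDeriv μ x).toReal * Real.log (ρ.rnDeriv μ x).toReal
      - (ρ.rnDeriv μ x).toReal + 1) ∂μ
  else ⊤

/-- The soft-marginal Hellinger–Kantorovich functional `E_κ(π|μ0,μ1)`. -/
def HKfun {n : ℕ} (κ : ℝ) (π : Measure (Eucl n × Eucl n)) (μ0 μ1 : Measure (Eucl n)) : ℝ≥0∞ :=
  ∫⁻ p, cHK κ p.1 p.2 ∂π + ENNReal.ofReal (κ ^ 2) * KLdiv (π.map Prod.fst) μ0
    + ENNReal.ofReal (κ ^ 2) * KLdiv (π.map Prod.snd) μ1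

/-- The squared Hellinger–Kantorovich distance `HK_κ²(μ0,μ1)`. -/
def HK2 {n : ℕ} (κ : ℝ) (μ0 μ1 : Measure (Eucl n)) : ℝ≥0∞ :=
  ⨅ (π : Measure (Eucl n × Eucl n)) (_ : IsFiniteMeasure π), HKfun κ π μ0 μ1

/-- The squared 2-Wasserstein distance `W2²(μ0,μ1)`. -/
def W2sq {n : ℕ} (μ0 μ1 : Measure (Eucl n)) : ℝ≥0∞ :=
  ⨅ (π : Measure (Eucl n × Eucl n))
    (_ : π.map Prod.fst = μ0 ∧ π.map Prod.snd = μ1),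
      ∫⁻ p, ENNReal.ofReal (dist p.1 p.2 ^ 2) ∂π

/-- Narrow convergence of a sequence of measures. -/
def NarrowTendsto {α : Type*} [MeasurableSpace α] [TopologicalSpace α]
    (ρ : ℕ → Measure α) (ρlim : Measure α) : Prop :=
  ∀ φ : BoundedContinuousFunction α ℝ,
    Tendsto (fun N => ∫ x, φ x ∂(ρ N)) atTop (𝓝 (∫ x, φ x ∂ρlim))

/-- The spherical Hellinger–Kantorovich distance `SHK_κ(μ0,μ1)`. -/
def SHK {n : ℕ} (κ : ℝ) (μ0 μ1 : Measure (Eucl n)) : ℝ :=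
  κ * Real.arccos (1 - (HK2 κ μ0 μ1).toReal / (2 * κ ^ 2))

/-- The square-root measure `√(ρσ)`. -/
def sqrtMeasure {α : Type*} [MeasurableSpace α] (ρ σ : Measure α) : Measure α :=
  (ρ + σ).withDensity (fun x => (ρ.rnDeriv (ρ + σ) x * σ.rnDeriv (ρ + σ) x) ^ (1/2 : ℝ))



/-- barycentric HK velocity. -/
def barV {n : ℕ} (κ : ℝ) (μ0 : Measure (Eucl n)) (π : Measure (Eucl n × Eucl n))
    [IsFiniteMeasure π] (x : Eucl n) : Eucl n :=
  (κ * ((π.map Prod.fst).rnDeriv μ0 x).toReal) •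
    ∫ y, (Real.tan (‖y - x‖ / κ) / ‖y - x‖) • (y - x) ∂(π.condKernel x)

/-- barycentric HK growth. -/
def barA {n : ℕ} (μ0 : Measure (Eucl n)) (π : Measure (Eucl n × Eucl n)) (x : Eucl n) : ℝ :=
  2 * (((π.map Prod.fst).rnDeriv μ0 x).toReal - 1)

/-- barycentric W2 velocity. -/
def barW {n : ℕ} (π : Measure (Eucl n × Eucl n)) [IsFiniteMeasure π] (x : Eucl n) : Eucl n :=
  ∫ y, (y - x) ∂(π.condKernel x)

end

/-!
Rescaling the optimal plan `π` to `c • π` multiplies the transport cost by `c` and turns each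
Kullback–Leibler term `KL(πᵢ|μᵢ)` into `c KL(πᵢ|μᵢ) + (1 - c) μᵢ(ℝⁿ) + c log c π(ℝⁿ)`. Since `c = 1`
minimises this function of `c`, its derivative vanishes there, which gives
`HK_κ²(μ0,μ1) = κ² (μ0(ℝⁿ) + μ1(ℝⁿ) - 2 π(ℝⁿ))`. On the other hand `α0 = 2 (dπ0/dμ0 - 1)`
`μ0`-a.e., so `∫ α0 dμ0 = 2 (π(ℝⁿ) - μ0(ℝⁿ))`.
-/

open InformationTheory
open scoped NNReal

section KullbackLeibler

variable {α : Type*} [MeasurableSpace α] {ρ μ : Measure α}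

lemma KLdiv_eq_klDiv [IsFiniteMeasure ρ] [IsFiniteMeasure μ] : KLdiv ρ μ = klDiv ρ μ := by
  rw [KLdiv, klDiv_eq_lintegral_klFun]
  congr with x
  rw [klFun]
  ring_nf

lemma klDiv_nnreal_smul_left_ne_top [IsFiniteMeasure ρ] [IsFiniteMeasure μ]
    (h : klDiv ρ μ ≠ ⊤) (c : ℝ≥0) : klDiv (c • ρ) μ ≠ ⊤ := by
  rcases eq_or_ne c 0 with rfl | hc
  · simp
  obtain ⟨hac, hint⟩ := klDiv_ne_top_iff.1 h
  refine klDiv_ne_top (hac.smul_left c) (Integrable.smul_measure_nnreal ?_)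
  rw [integrable_congr (llr_smul_nnreal_left hac c hc)]
  fun_prop

end KullbackLeibler

section LebesgueDecomposition

variable {α : Type*} [MeasurableSpace α] {μ ν : Measure α}

lemma Measure.ae_of_ae_of_ae_singularPart [μ.HaveLebesgueDecomposition ν] {p : α → Prop}
    (h : ∀ᵐ x ∂ν, p x) (hs : ∀ᵐ x ∂μ.singularPart ν, p x) : ∀ᵐ x ∂μ, p x := by
  rw [← μ.singularPart_add_rnDeriv ν, ae_add_measure_iff]
  exact ⟨hs, (withDensity_absolutelyContinuous _ _).ae_le h⟩

lemma integral_eq_two_mul_sub_of_ae_eq_rnDeriv [IsFiniteMeasure μ] [IsFiniteMeasure ν]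
    (hνμ : ν ≪ μ) {a : α → ℝ} (ha : ∀ᵐ x ∂ν, a x = 2 * ((ν.rnDeriv μ x).toReal - 1))
    (ha_perp : ∀ᵐ x ∂μ.singularPart ν, a x = -2) :
    ∫ x, a x ∂μ = 2 * (ν.real Set.univ - μ.real Set.univ) := by
  have ha_ae : ∀ᵐ x ∂μ, a x = 2 * ((ν.rnDeriv μ x).toReal - 1) := by
    refine Measure.ae_of_ae_of_ae_singularPart ha ?_
    filter_upwards [ha_perp, Measure.rnDeriv_eq_zero_ae_singularPart ν μ] with x hx hx0
    simp [hx, hx0]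
  rw [integral_congr_ae ha_ae, integral_const_mul,
    integral_sub Measure.integrable_toReal_rnDeriv (integrable_const 1),
    Measure.integral_toReal_rnDeriv hνμ]
  simp

end LebesgueDecomposition

lemma Measure.real_map_univ {α β : Type*} [MeasurableSpace α] [MeasurableSpace β]
    (μ : Measure α) {f : α → β} (hf : Measurable f) :
    (μ.map f).real Set.univ = μ.real Set.univ := by
  simp [measureReal_def, Measure.map_apply hf MeasurableSet.univ]

lemma hasDerivAt_klDiv_scaling (K M m : ℝ) :
    HasDerivAt (fun c : ℝ => c * K + (1 - c) * M + c * Real.log c * m) (K - M + m) 1 := by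
  have h : HasDerivAt (fun c : ℝ => c * K + (1 - c) * M + c * Real.log c * m)
      (1 * K + (0 - 1) * M + (Real.log 1 + 1) * m) 1 :=
    (((hasDerivAt_id' 1).mul_const K).add
      (((hasDerivAt_const 1 1).sub (hasDerivAt_id' 1)).mul_const M)).add
      ((Real.hasDerivAt_mul_log one_ne_zero).mul_const m)
  convert h using 1
  simp [sub_eq_add_neg]

lemma HK2_le_HKfun {n : ℕ} (κ : ℝ) (μ0 μ1 : Measure (Eucl n)) (π : Measure (Eucl n × Eucl n))
    [IsFiniteMeasure π] : HK2 κ μ0 μ1 ≤ HKfun κ π μ0 μ1 :=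
  iInf₂_le π ‹_›

section HellingerKantorovich

variable {n : ℕ} {κ : ℝ} {μ0 μ1 : Measure (Eucl n)} [IsFiniteMeasure μ0] [IsFiniteMeasure μ1]
  {π : Measure (Eucl n × Eucl n)} [IsFiniteMeasure π]

lemma HKfun_eq_klDiv : HKfun κ π μ0 μ1 = ∫⁻ p, cHK κ p.1 p.2 ∂π
    + ENNReal.ofReal (κ ^ 2) * klDiv (π.map Prod.fst) μ0
    + ENNReal.ofReal (κ ^ 2) * klDiv (π.map Prod.snd) μ1 := by
  rw [HKfun, KLdiv_eq_klDiv, KLdiv_eq_klDiv]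

lemma HK2_lt_top : HK2 κ μ0 μ1 < ⊤ := by
  refine (HK2_le_HKfun κ μ0 μ1 0).trans_lt ?_
  simp [HKfun_eq_klDiv, ENNReal.mul_lt_top]

lemma HKfun_ne_top_iff (hκ : κ ≠ 0) : HKfun κ π μ0 μ1 ≠ ⊤ ↔ ∫⁻ p, cHK κ p.1 p.2 ∂π ≠ ⊤ ∧
    klDiv (π.map Prod.fst) μ0 ≠ ⊤ ∧ klDiv (π.map Prod.snd) μ1 ≠ ⊤ := by
  simp [HKfun_eq_klDiv, ENNReal.mul_eq_top, hκ, and_assoc]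

lemma HKfun_nnreal_smul_ne_top (hκ : κ ≠ 0) (hπ : HKfun κ π μ0 μ1 ≠ ⊤) (c : ℝ≥0) :
    HKfun κ (c • π) μ0 μ1 ≠ ⊤ := by
  obtain ⟨hcost, hkl0, hkl1⟩ := (HKfun_ne_top_iff hκ).1 hπ
  refine (HKfun_ne_top_iff hκ).2 ⟨?_, ?_, ?_⟩
  · rw [lintegral_smul_measure, ENNReal.smul_def]
    exact ENNReal.mul_ne_top ENNReal.coe_ne_top hcost
  · rw [Measure.map_smul]
    exact klDiv_nnreal_smul_left_ne_top hkl0 c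
  · rw [Measure.map_smul]
    exact klDiv_nnreal_smul_left_ne_top hkl1 c

lemma toReal_HKfun_nnreal_smul (hκ : κ ≠ 0) (hπ : HKfun κ π μ0 μ1 ≠ ⊤) (c : ℝ≥0) :
    (HKfun κ (c • π) μ0 μ1).toReal = c * (∫⁻ p, cHK κ p.1 p.2 ∂π).toReal
      + κ ^ 2 * (c * (klDiv (π.map Prod.fst) μ0).toReal + (1 - c) * μ0.real Set.univ
          + c * Real.log c * π.real Set.univ)
      + κ ^ 2 * (c * (klDiv (π.map Prod.snd) μ1).toReal + (1 - c) * μ1.real Set.univ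
          + c * Real.log c * π.real Set.univ) := by
  have hfin := HKfun_nnreal_smul_ne_top hκ hπ c
  rw [HKfun_eq_klDiv, ENNReal.add_ne_top, ENNReal.add_ne_top] at hfin
  obtain ⟨hac0, hint0⟩ := klDiv_ne_top_iff.1 ((HKfun_ne_top_iff hκ).1 hπ).2.1
  obtain ⟨hac1, hint1⟩ := klDiv_ne_top_iff.1 ((HKfun_ne_top_iff hκ).1 hπ).2.2
  rw [HKfun_eq_klDiv, ENNReal.toReal_add (ENNReal.add_ne_top.2 hfin.1) hfin.2,
    ENNReal.toReal_add hfin.1.1 hfin.1.2, Measure.map_smul, Measure.map_smul,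
    ENNReal.toReal_mul, ENNReal.toReal_mul, toReal_klDiv_smul_left hac0 hint0,
    toReal_klDiv_smul_left hac1 hint1, Measure.real_map_univ π measurable_fst,
    Measure.real_map_univ π measurable_snd, lintegral_smul_measure, ENNReal.smul_def,
    smul_eq_mul, ENNReal.toReal_mul, ENNReal.toReal_ofReal (sq_nonneg κ), ENNReal.coe_toReal]

theorem toReal_HK2_of_HKfun_eq_HK2 (hκ : κ ≠ 0) (hπ : HKfun κ π μ0 μ1 = HK2 κ μ0 μ1) :
    (HK2 κ μ0 μ1).toReal = κ ^ 2 * (μ0.real Set.univ + μ1.real Set.univ - 2 * π.real Set.univ) := by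
  have hfin : HKfun κ π μ0 μ1 ≠ ⊤ := hπ ▸ HK2_lt_top.ne
  set I := (∫⁻ p, cHK κ p.1 p.2 ∂π).toReal
  set K0 := (klDiv (π.map Prod.fst) μ0).toReal
  set K1 := (klDiv (π.map Prod.snd) μ1).toReal
  set m := π.real Set.univ
  set g : ℝ → ℝ := fun c ↦ c * I
    + κ ^ 2 * (c * K0 + (1 - c) * μ0.real Set.univ + c * Real.log c * m)
    + κ ^ 2 * (c * K1 + (1 - c) * μ1.real Set.univ + c * Real.log c * m)
  have hg (c : ℝ≥0) : (HKfun κ (c • π) μ0 μ1).toReal = g c :=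
    toReal_HKfun_nnreal_smul hκ hfin c
  have hg_one : (HK2 κ μ0 μ1).toReal = g 1 := by rw [← hπ, ← one_smul ℝ≥0 π, hg 1]; rfl
  have hmin : IsLocalMin g 1 := by
    filter_upwards [eventually_gt_nhds zero_lt_one] with c hc
    rw [← hg_one, ← Real.coe_toNNReal c hc.le, ← hg]
    exact ENNReal.toReal_mono (HKfun_nnreal_smul_ne_top hκ hfin _) (HK2_le_HKfun κ μ0 μ1 _)
  have hderiv : HasDerivAt g (1 * I + κ ^ 2 * (K0 - μ0.real Set.univ + m)
      + κ ^ 2 * (K1 - μ1.real Set.univ + m)) 1 :=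
    (((hasDerivAt_id' 1).mul_const I).add
      ((hasDerivAt_klDiv_scaling K0 _ m).const_mul (κ ^ 2))).add
      ((hasDerivAt_klDiv_scaling K1 _ m).const_mul (κ ^ 2))
  have h0 := hmin.hasDerivAt_eq_zero hderiv
  simp only [g, Real.log_one] at hg_one
  linear_combination hg_one + h0

end HellingerKantorovich

theorem hk_mean_growth_general
    {n : ℕ} (κ : ℝ) (hκ : 0 < κ)
    (μ0 μ1 : Measure (Eucl n)) [IsProbabilityMeasure μ0] [IsProbabilityMeasure μ1]
    -- `π = (id,T)_# π0` is the unique minimizer of `E_κ(·|μ0,μ1)`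
    (π : Measure (Eucl n × Eucl n)) [IsFiniteMeasure π]
    (hπopt : HKfun κ π μ0 μ1 = HK2 κ μ0 μ1)
    -- the components `(v0, α0, μ1^⊥)` of the HK logarithmic map
    (α0 : Eucl n → ℝ)
    (hα0 : ∀ᵐ x ∂(π.map Prod.fst),
      α0 x = 2 * (((π.map Prod.fst).rnDeriv μ0 x).toReal - 1))
    (hα0perp : ∀ᵐ x ∂(μ0.singularPart (π.map Prod.fst)), α0 x = -2) :
    ∫ x, α0 x ∂μ0 = -(HK2 κ μ0 μ1).toReal / κ ^ 2 := by
  have hfin : HKfun κ π μ0 μ1 ≠ ⊤ := hπopt ▸ HK2_lt_top.ne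
  have hac : π.map Prod.fst ≪ μ0 :=
    (klDiv_ne_top_iff.1 ((HKfun_ne_top_iff hκ.ne').1 hfin).2.1).1
  rw [integral_eq_two_mul_sub_of_ae_eq_rnDeriv hac hα0 hα0perp,
    toReal_HK2_of_HKfun_eq_HK2 hκ.ne' hπopt]
  simp only [Measure.real_map_univ π measurable_fst, probReal_univ]
  field_simp
  ring

/-- the mean growth rate equals `−HK_κ²(μ0,μ1)/κ²` for probability measures. -/
theorem hk_mean_growth
    {n : ℕ} (hn : 1 ≤ n) (κ : ℝ) (hκ : 0 < κ)
    (μ0 μ1 : Measure (Eucl n)) [IsProbabilityMeasure μ0] [IsProbabilityMeasure μ1]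
    (hμ0K : ∃ K : Set (Eucl n), IsCompact K ∧ μ0 Kᶜ = 0)
    (hμ1K : ∃ K : Set (Eucl n), IsCompact K ∧ μ1 Kᶜ = 0)
    (hμ0ac : μ0 ≪ (volume : Measure (Eucl n)))
    -- `π = (id,T)_# π0` is the unique minimizer of `E_κ(·|μ0,μ1)`
    (π : Measure (Eucl n × Eucl n)) [IsFiniteMeasure π]
    (hπopt : HKfun κ π μ0 μ1 = HK2 κ μ0 μ1)
    (hπuniq : ∀ π' : Measure (Eucl n × Eucl n), IsFiniteMeasure π' →
      HKfun κ π' μ0 μ1 = HK2 κ μ0 μ1 → π' = π)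
    (T : Eucl n → Eucl n) (hT : Measurable T)
    (hπT : π = (π.map Prod.fst).map (fun x => (x, T x)))
    -- the components `(v0, α0, μ1^⊥)` of the HK logarithmic map
    (v0 : Eucl n → Eucl n) (α0 : Eucl n → ℝ)
    (hv0 : ∀ᵐ x ∂(π.map Prod.fst), v0 x =
      (κ * ((π.map Prod.fst).rnDeriv μ0 x).toReal * Real.tan (‖T x - x‖ / κ) / ‖T x - x‖) •
        (T x - x))
    (hv0perp : ∀ᵐ x ∂(μ0.singularPart (π.map Prod.fst)), v0 x = 0)
    (hα0 : ∀ᵐ x ∂(π.map Prod.fst),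
      α0 x = 2 * (((π.map Prod.fst).rnDeriv μ0 x).toReal - 1))
    (hα0perp : ∀ᵐ x ∂(μ0.singularPart (π.map Prod.fst)), α0 x = -2) :
    ∫ x, α0 x ∂μ0 = -(HK2 κ μ0 μ1).toReal / κ ^ 2 :=
  hk_mean_growth_general κ hκ μ0 μ1 π hπopt α0 hα0 hα0perp
end

section
/- Let n ≥ 1, K ⊂ ℝ^n compact, and let (μ0^N), (μ1^N) be sequences of Borel probability measures supported in K converging narrowly to μ0 and μ1 respectively, where μ0 is absolutely continuous with respect to Lebesgue measure. Let π^N be couplings of (μ0^N, μ1^N) converging narrowly to π, where π is the (unique) optimal coupling for W2²(μ0,μ1). Define the barycentric vector fields v0^N(x) = ∫ (y − x) dπ^N(y|x) (disintegration of π^N with respect to its first marginal μ0^N), and let v0 = T − id where π = (id,T)_# μ0. Then for every continuous vector field φ : K → ℝ^n, ∫ ⟨φ(x), v0^N(x)⟩ dμ0^N(x) → ∫ ⟨φ(x), v0(x)⟩ dμ0(x) as N → ∞; that is, the momentum measures v0^N·μ0^N converge narrowly to v0·μ0. -/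
open MeasureTheory ENNReal Filter Topology RealInnerProductSpace
open scoped Classical

/-! Since every `π^N` lives on the compact set `K × K`, so does its narrow limit, and on such
measures the unbounded test function `(x, y) ↦ ⟪φ x, y - x⟫` can be traded for a bounded continuous
(Tietze) extension of its restriction to `K × K`. Disintegrating `π^N` along its first marginal
turns the momentum `∫ ⟪φ, v₀^N⟫ dμ₀^N` into `∫ ⟪φ x, y - x⟫ dπ^N`, which therefore converges to
`∫ ⟪φ x, y - x⟫ d(id, T)_# μ₀ = ∫ ⟪φ x, T x - x⟫ dμ₀`. -/

open Set
open scoped BoundedContinuousFunction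

theorem NarrowTendsto.measure_compl_eq_zero {α : Type*} [TopologicalSpace α]
    [PerfectlyNormalSpace α] [MeasurableSpace α] [OpensMeasurableSpace α]
    {ρs : ℕ → Measure α} {ρ : Measure α} [IsFiniteMeasure ρ] (h : NarrowTendsto ρs ρ)
    {F : Set α} (hF : IsClosed F) (hρs : ∀ N, ρs N Fᶜ = 0) : ρ Fᶜ = 0 := by
  obtain ⟨f, rfl, hf01⟩ :=
    perfectlyNormalSpace_iff_forall_isClosed_preimage_zero.1 ‹_› F hF
  let d : α →ᵇ ℝ := .mkOfBound f 1 fun x y => by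
    rw [Real.dist_eq, abs_sub_le_iff]
    constructor <;> linarith [(hf01 x).1, (hf01 x).2, (hf01 y).1, (hf01 y).2]
  have hd_nonneg : 0 ≤ ⇑d := fun x => (hf01 x).1
  have hd_zero (N : ℕ) : ∫ x, d x ∂ρs N = 0 :=
    integral_eq_zero_of_ae (mem_ae_iff.2 (hρs N))
  have hlim : ∫ x, d x ∂ρ = 0 :=
    tendsto_nhds_unique (h d) (by simp only [hd_zero, tendsto_const_nhds])
  rw [integral_eq_zero_iff_of_nonneg hd_nonneg (d.integrable ρ)] at hlim
  exact ae_iff.1 hlim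

theorem exists_boundedContinuous_eqOn_of_isCompact {Y : Type*} [TopologicalSpace Y]
    [NormalSpace Y] [T2Space Y] {g : Y → ℝ} (hg : Continuous g) {C : Set Y}
    (hC : IsCompact C) : ∃ f : Y →ᵇ ℝ, EqOn f g C := by
  have := isCompact_iff_compactSpace.1 hC
  obtain ⟨f, -, hf⟩ := BoundedContinuousFunction.exists_norm_eq_domRestrict_eq_of_closed
    (.mkOfCompact ⟨C.domRestrict g, hg.continuousOn.domRestrict⟩) hC.isClosed
  exact ⟨f, fun x hx => congr($hf ⟨x, hx⟩)⟩

theorem NarrowTendsto.tendsto_integral_of_isCompact {α : Type*} [TopologicalSpace α]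
    [PerfectlyNormalSpace α] [T2Space α] [MeasurableSpace α] [OpensMeasurableSpace α]
    {ρs : ℕ → Measure α} {ρ : Measure α} [IsFiniteMeasure ρ] (h : NarrowTendsto ρs ρ)
    {C : Set α} (hC : IsCompact C) (hρs : ∀ N, ρs N Cᶜ = 0) {g : α → ℝ} (hg : Continuous g) :
    Tendsto (fun N => ∫ x, g x ∂ρs N) atTop (𝓝 (∫ x, g x ∂ρ)) := by
  obtain ⟨f, hfg⟩ := exists_boundedContinuous_eqOn_of_isCompact hg hC
  have integral_eq (μ : Measure α) (hμ : μ Cᶜ = 0) : ∫ x, f x ∂μ = ∫ x, g x ∂μ :=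
    integral_congr_ae <| Eventually.mono (mem_ae_iff.2 hμ) fun _ hx => hfg hx
  simpa only [integral_eq _ (hρs _), integral_eq ρ (h.measure_compl_eq_zero hC.isClosed hρs)]
    using h f

theorem Continuous.integrable_of_measure_compl_eq_zero {α E : Type*} [TopologicalSpace α]
    [T2Space α] [MeasurableSpace α] [OpensMeasurableSpace α] [NormedAddCommGroup E]
    {μ : Measure α} [IsFiniteMeasure μ] {f : α → E} (hf : Continuous f) {C : Set α}
    (hC : IsCompact C) (hμ : μ Cᶜ = 0) : Integrable f μ := by
  rw [← Measure.restrict_eq_self_of_ae_mem (mem_ae_iff.2 hμ)]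
  exact hf.continuousOn.integrableOn_compact hC

theorem measure_compl_prod_eq_zero {α β : Type*} [MeasurableSpace α] [MeasurableSpace β]
    {ρ : Measure (α × β)} {s : Set α} {t : Set β} (hs : ρ.fst sᶜ = 0) (ht : ρ.snd tᶜ = 0) :
    ρ (s ×ˢ t)ᶜ = 0 := by
  rw [compl_prod_eq_union, prod_univ, univ_prod]
  exact measure_union_null
    (le_zero_iff.1 <| (Measure.le_map_apply measurable_fst.aemeasurable sᶜ).trans hs.le)
    (le_zero_iff.1 <| (Measure.le_map_apply measurable_snd.aemeasurable tᶜ).trans ht.le)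

theorem integral_inner_barW {n : ℕ} (ρ : Measure (Eucl n × Eucl n)) [IsFiniteMeasure ρ]
    {φ : Eucl n → Eucl n} (hρ : Integrable (fun p => p.2 - p.1) ρ)
    (hφ : Integrable (fun p => ⟪φ p.1, p.2 - p.1⟫) ρ) :
    ∫ x, ⟪φ x, barW ρ x⟫ ∂ρ.fst = ∫ p, ⟪φ p.1, p.2 - p.1⟫ ∂ρ := by
  rw [← Measure.integral_condKernel hφ]
  refine integral_congr_ae ?_
  filter_upwards [hρ.condKernel_ae] with x hx
  exact (integral_inner hx (φ x)).symm

theorem w2_barycentric_momentum_narrow_convergence_general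
    {n : ℕ} (K : Set (Eucl n)) (hK : IsCompact K)
    (μ0N μ1N : ℕ → Measure (Eucl n))
    (hμ0NK : ∀ N, μ0N N Kᶜ = 0) (hμ1NK : ∀ N, μ1N N Kᶜ = 0)
    (μ0 : Measure (Eucl n)) [IsProbabilityMeasure μ0]
    -- `π^N` are couplings of `(μ0^N, μ1^N)` converging narrowly to `π`
    (π : ℕ → Measure (Eucl n × Eucl n)) [∀ N, IsFiniteMeasure (π N)]
    (hπNmarg : ∀ N, (π N).map Prod.fst = μ0N N ∧ (π N).map Prod.snd = μ1N N)
    (T : Eucl n → Eucl n) (hT : Measurable T)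
    (hπconv : NarrowTendsto π (μ0.map fun x => (x, T x))) :
    ∀ φ : Eucl n → Eucl n, Continuous φ →
      Tendsto (fun N => ∫ x, ⟪φ x, barW (π N) x⟫ ∂(μ0N N)) atTop
        (𝓝 (∫ x, ⟪φ x, T x - x⟫ ∂μ0)) := by
  intro φ hφ
  have hπK (N : ℕ) : π N (K ×ˢ K)ᶜ = 0 :=
    measure_compl_prod_eq_zero (by rw [Measure.fst, (hπNmarg N).1]; exact hμ0NK N)
      (by rw [Measure.snd, (hπNmarg N).2]; exact hμ1NK N)
  have hcont : Continuous fun p : Eucl n × Eucl n => ⟪φ p.1, p.2 - p.1⟫ := by fun_prop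
  have hlim := hπconv.tendsto_integral_of_isCompact (hK.prod hK) hπK hcont
  rw [integral_map (by fun_prop) hcont.aestronglyMeasurable] at hlim
  refine hlim.congr fun N => ?_
  rw [← (hπNmarg N).1, ← Measure.fst, integral_inner_barW]
  · exact (continuous_snd.sub continuous_fst).integrable_of_measure_compl_eq_zero (hK.prod hK)
      (hπK N)
  · exact hcont.integrable_of_measure_compl_eq_zero (hK.prod hK) (hπK N)

/-- narrow convergence of the barycentric momentum measures for `W2`. -/
theorem w2_barycentric_momentum_narrow_convergence
    {n : ℕ} (hn : 1 ≤ n) (K : Set (Eucl n)) (hK : IsCompact K)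
    (μ0N μ1N : ℕ → Measure (Eucl n))
    [∀ N, IsProbabilityMeasure (μ0N N)] [∀ N, IsProbabilityMeasure (μ1N N)]
    (hμ0NK : ∀ N, μ0N N Kᶜ = 0) (hμ1NK : ∀ N, μ1N N Kᶜ = 0)
    (μ0 μ1 : Measure (Eucl n)) [IsProbabilityMeasure μ0] [IsProbabilityMeasure μ1]
    (hμ0conv : NarrowTendsto μ0N μ0) (hμ1conv : NarrowTendsto μ1N μ1)
    (hμ0ac : μ0 ≪ (volume : Measure (Eucl n)))
    -- `π^N` are couplings of `(μ0^N, μ1^N)` converging narrowly to `π`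
    (π : ℕ → Measure (Eucl n × Eucl n)) [∀ N, IsFiniteMeasure (π N)]
    (hπNmarg : ∀ N, (π N).map Prod.fst = μ0N N ∧ (π N).map Prod.snd = μ1N N)
    -- `π = (id,T)_# μ0` is the unique optimal coupling for `W2²(μ0,μ1)`
    (T : Eucl n → Eucl n) (hT : Measurable T)
    (hTmarg : (μ0.map fun x => (x, T x)).map Prod.snd = μ1)
    (hTopt : ∫⁻ p, ENNReal.ofReal (dist p.1 p.2 ^ 2) ∂(μ0.map fun x => (x, T x))
      = W2sq μ0 μ1)
    (hTuniq : ∀ γ : Measure (Eucl n × Eucl n), γ.map Prod.fst = μ0 → γ.map Prod.snd = μ1 →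
      ∫⁻ p, ENNReal.ofReal (dist p.1 p.2 ^ 2) ∂γ = W2sq μ0 μ1 →
      γ = μ0.map fun x => (x, T x))
    (hπconv : NarrowTendsto π (μ0.map fun x => (x, T x))) :
    ∀ φ : Eucl n → Eucl n, Continuous φ →
      Tendsto (fun N => ∫ x, ⟪φ x, barW (π N) x⟫ ∂(μ0N N)) atTop
        (𝓝 (∫ x, ⟪φ x, T x - x⟫ ∂μ0)) :=
  w2_barycentric_momentum_narrow_convergence_general K hK μ0N μ1N hμ0NK hμ1NK μ0 π hπNmarg T hT
    hπconv
end

section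
/- Let n ≥ 1, κ > 0, let μ0, μ1 be finite nonnegative compactly supported Borel measures on ℝ^n, and let γ0, γ1 be finite nonnegative Borel measures on ℝ^n × ℝ^n with proj_{0#} γ0 = μ0 and proj_{1#} γ1 = μ1 satisfying κ²( γ0(ℝ^n×ℝ^n) + γ1(ℝ^n×ℝ^n) − 2 ∫ Cos(|x−y|/κ) d√(γ0γ1)(x,y) ) = HK_κ²(μ0,μ1), where Cos(s) = cos(min(|s|, π/2)). Then the measure π := Cos(|x−y|/κ)·√(γ0γ1) minimizes the soft-marginal formulation: E_κ(π|μ0,μ1) = HK_κ²(μ0,μ1). -/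
open MeasureTheory ENNReal Filter Topology RealInnerProductSpace
open scoped Classical

/-!
Let τ = γ0 + γ1, fᵢ = dγᵢ/dτ and C = Cos(|x - y|/κ). Then π = √(f0 f1) C τ has density
u0 = √(f1/f0) C with respect to γ0 and u1 = √(f0/f1) C with respect to γ1, so disintegrating γᵢ
along the i-th projection and applying Jensen's inequality fibrewise gives
KL(πᵢ|μᵢ) ≤ ∫ F(uᵢ) dγᵢ with F(s) = s log s - s + 1. Where C > 0 the cost is -2κ² log C, and a
direct computation gives, pointwise,
  √(f0 f1) C c_κ + κ² (f0 F(u0) + f1 F(u1) + 2 √(f0 f1) C) = κ² (f0 + f1).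
Integrating against τ and using the optimality of (γ0, γ1) to cancel the finite term
2κ² ∫ C d√(γ0γ1) yields E_κ(π|μ0,μ1) ≤ HK_κ²(μ0,μ1); the reverse inequality holds since π is
finite.
-/

open InformationTheory

noncomputable def klFunENN (t : ℝ≥0∞) : ℝ≥0∞ := ENNReal.ofReal (klFun t.toReal)

@[fun_prop]
lemma measurable_klFunENN : Measurable klFunENN :=
  ENNReal.measurable_ofReal.comp (measurable_klFun.comp ENNReal.measurable_toReal)

lemma klFun_add_log_mul_sub_le {s t : ℝ} (hs : 0 < s) (ht : 0 ≤ t) :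
    klFun s + Real.log s * (t - s) ≤ klFun t := by
  rcases ht.eq_or_lt with rfl | ht
  · simp only [klFun, zero_sub, Real.log_zero, mul_zero]
    linarith
  · have h := mul_le_mul_of_nonneg_left (Real.log_le_sub_one_of_pos (div_pos hs ht)) ht.le
    rw [Real.log_div hs.ne' ht.ne', mul_sub, mul_sub, mul_one, mul_div_cancel₀ _ ht.ne'] at h
    simp only [klFun]
    linarith

lemma ofReal_integral_le_lintegral_ofReal {α : Type*} [MeasurableSpace α] {μ : Measure α}
    {f : α → ℝ} (hf : Integrable f μ) :
    ENNReal.ofReal (∫ x, f x ∂μ) ≤ ∫⁻ x, ENNReal.ofReal (f x) ∂μ := by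
  refine ENNReal.ofReal_le_of_le_toReal ?_
  rw [integral_eq_lintegral_pos_part_sub_lintegral_neg_part hf]
  exact sub_le_self _ ENNReal.toReal_nonneg

lemma klFunENN_lintegral_le {β : Type*} [MeasurableSpace β] {ν : Measure β}
    [IsProbabilityMeasure ν] {v : β → ℝ≥0∞} (hv : Measurable v) (hfin : ∫⁻ y, v y ∂ν ≠ ∞) :
    klFunENN (∫⁻ y, v y ∂ν) ≤ ∫⁻ y, klFunENN (v y) ∂ν := by
  set r := ∫⁻ y, v y ∂ν
  rcases eq_or_ne r 0 with hr0 | hr0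
  · have hv0 : ∀ᵐ y ∂ν, v y = 0 := (lintegral_eq_zero_iff hv).1 hr0
    rw [hr0, lintegral_congr_ae (hv0.mono fun y hy => by rw [hy])]
    simp
  set m := r.toReal
  have hm : 0 < m := ENNReal.toReal_pos hr0 hfin
  have hint : Integrable (fun y => (v y).toReal) ν :=
    integrable_toReal_of_lintegral_ne_top hv.aemeasurable hfin
  have hmean : ∫ y, (v y).toReal ∂ν = m := integral_toReal hv.aemeasurable (ae_lt_top hv hfin)
  have hlin : Integrable (fun y => Real.log m * ((v y).toReal - m)) ν :=
    (hint.sub (integrable_const _)).const_mul _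
  -- compare with the tangent line of `klFun` at the mean, which is integrable even when
  -- `klFun ∘ v` is not
  calc klFunENN r
      = ENNReal.ofReal (∫ y, (klFun m + Real.log m * ((v y).toReal - m)) ∂ν) := by
        rw [integral_add (integrable_const _) hlin, integral_const_mul,
          integral_sub hint (integrable_const _), hmean]
        simp [klFunENN, m]
    _ ≤ ∫⁻ y, ENNReal.ofReal (klFun m + Real.log m * ((v y).toReal - m)) ∂ν :=
        ofReal_integral_le_lintegral_ofReal ((integrable_const _).add hlin)
    _ ≤ ∫⁻ y, klFunENN (v y) ∂ν :=
        lintegral_mono fun y =>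
          ENNReal.ofReal_le_ofReal (klFun_add_log_mul_sub_le hm ENNReal.toReal_nonneg)

lemma KLdiv_withDensity {α : Type*} [MeasurableSpace α] {μ : Measure α} [SigmaFinite μ]
    {r : α → ℝ≥0∞} (hr : Measurable r) :
    KLdiv (μ.withDensity r) μ = ∫⁻ x, klFunENN (r x) ∂μ := by
  rw [KLdiv, if_pos (withDensity_absolutelyContinuous μ r)]
  refine lintegral_congr_ae ?_
  filter_upwards [Measure.rnDeriv_withDensity μ hr] with x hx
  rw [hx, klFunENN, klFun]
  congr 1
  ring

lemma map_withDensity_comp {α β : Type*} [MeasurableSpace α] [MeasurableSpace β] {μ : Measure α}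
    {f : α → β} (hf : Measurable f) {g : β → ℝ≥0∞} (hg : Measurable g) :
    (μ.withDensity (g ∘ f)).map f = (μ.map f).withDensity g := by
  ext s hs
  rw [Measure.map_apply hf hs, withDensity_apply _ (hf hs), withDensity_apply _ hs,
    setLIntegral_map hs hg hf]
  rfl

section Marginals

variable {α β : Type*} [MeasurableSpace α] [MeasurableSpace β]

lemma fst_withDensity_eq [StandardBorelSpace β] [Nonempty β] (γ : Measure (α × β))
    [IsFiniteMeasure γ] {u : α × β → ℝ≥0∞} (hu : Measurable u) :
    (γ.withDensity u).fst = γ.fst.withDensity (fun x => ∫⁻ y, u (x, y) ∂γ.condKernel x) := by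
  ext s hs
  rw [Measure.fst_apply hs, withDensity_apply _ (measurable_fst hs), withDensity_apply _ hs,
    ← Set.prod_univ]
  conv_lhs => rw [← γ.disintegrate γ.condKernel]
  rw [Measure.setLIntegral_compProd hu hs MeasurableSet.univ]
  simp

lemma KLdiv_fst_withDensity_le [StandardBorelSpace β] [Nonempty β] (γ : Measure (α × β))
    [IsFiniteMeasure γ] {u : α × β → ℝ≥0∞} (hu : Measurable u) (hfin : ∫⁻ p, u p ∂γ ≠ ∞) :
    KLdiv (γ.withDensity u).fst γ.fst ≤ ∫⁻ p, klFunENN (u p) ∂γ := by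
  have hdis : ∀ {f : α × β → ℝ≥0∞}, Measurable f →
      ∫⁻ p, f p ∂γ = ∫⁻ x, ∫⁻ y, f (x, y) ∂γ.condKernel x ∂γ.fst := fun hf => by
    conv_lhs => rw [← γ.disintegrate γ.condKernel]
    exact Measure.lintegral_compProd hf
  have hfiber : ∀ᵐ x ∂γ.fst, ∫⁻ y, u (x, y) ∂γ.condKernel x ≠ ∞ :=
    (ae_lt_top (hu.lintegral_kernel_prod_right') (hdis hu ▸ hfin)).mono fun _ hx => hx.ne
  rw [fst_withDensity_eq γ hu, KLdiv_withDensity hu.lintegral_kernel_prod_right',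
    hdis (f := fun p => klFunENN (u p)) (by fun_prop)]
  exact lintegral_mono_ae (hfiber.mono fun x hx =>
    klFunENN_lintegral_le (hu.comp measurable_prodMk_left) hx)

lemma KLdiv_snd_withDensity_le [StandardBorelSpace α] [Nonempty α] (γ : Measure (α × β))
    [IsFiniteMeasure γ] {u : α × β → ℝ≥0∞} (hu : Measurable u) (hfin : ∫⁻ p, u p ∂γ ≠ ∞) :
    KLdiv (γ.withDensity u).snd γ.snd ≤ ∫⁻ p, klFunENN (u p) ∂γ := by
  have hus : Measurable (u ∘ Prod.swap) := hu.comp measurable_swap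
  have hswap : (γ.withDensity u).map Prod.swap
      = (γ.map Prod.swap).withDensity (u ∘ Prod.swap) := by
    rw [← map_withDensity_comp measurable_swap hus]
    rfl
  have hmap : ∫⁻ p, klFunENN ((u ∘ Prod.swap) p) ∂γ.map Prod.swap = ∫⁻ p, klFunENN (u p) ∂γ :=
    lintegral_map (measurable_klFunENN.comp hus) measurable_swap
  rw [← Measure.fst_map_swap, ← γ.fst_map_swap, hswap, ← hmap]
  exact KLdiv_fst_withDensity_le _ hus (by rwa [lintegral_map hus measurable_swap])

end Marginals

lemma ENNReal.mul_rpow_half_div {x : ℝ≥0∞} (y : ℝ≥0∞) (hx : x ≠ ∞) :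
    x * (y / x) ^ (1/2 : ℝ) = (x * y) ^ (1/2 : ℝ) := by
  rcases eq_or_ne x 0 with rfl | hx0
  · simp
  have hxx : (x * x) ^ (1/2 : ℝ) = x := by
    rw [← sq, ← ENNReal.rpow_natCast, ← ENNReal.rpow_mul]
    norm_num
  calc x * (y / x) ^ (1/2 : ℝ) = (x * x) ^ (1/2 : ℝ) * (y / x) ^ (1/2 : ℝ) := by rw [hxx]
    _ = (x * x * (y / x)) ^ (1/2 : ℝ) := (ENNReal.mul_rpow_of_nonneg _ _ (by norm_num)).symm
    _ = (x * y) ^ (1/2 : ℝ) := by rw [mul_assoc, ENNReal.mul_div_cancel hx0 hx]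

lemma ENNReal.rpow_half_mul_le_add (a b : ℝ≥0∞) : (a * b) ^ (1/2 : ℝ) ≤ a + b := by
  calc (a * b) ^ (1/2 : ℝ) ≤ ((a + b) ^ 2) ^ (1/2 : ℝ) :=
        ENNReal.rpow_le_rpow (sq (a + b) ▸ mul_le_mul' le_self_add le_add_self) (by norm_num)
    _ = a + b := by
        rw [← ENNReal.rpow_natCast, ← ENNReal.rpow_mul]
        norm_num

lemma withDensity_rpow_half_mul {α : Type*} [MeasurableSpace α] {τ : Measure α}
    {f g : α → ℝ≥0∞} (hf : Measurable f) (hg : Measurable g) (hf_ne_top : ∀ᵐ x ∂τ, f x ≠ ∞) :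
    τ.withDensity (fun x => (f x * g x) ^ (1/2 : ℝ))
      = (τ.withDensity f).withDensity (fun x => (g x / f x) ^ (1/2 : ℝ)) := by
  rw [← withDensity_mul τ hf (by fun_prop)]
  refine withDensity_congr_ae ?_
  filter_upwards [hf_ne_top] with x hx
  exact (ENNReal.mul_rpow_half_div _ hx).symm

section SqrtMeasure

variable {α : Type*} [MeasurableSpace α] (ρ σ : Measure α) [SigmaFinite ρ] [SigmaFinite σ]

lemma sqrtMeasure_eq_withDensity_left :
    sqrtMeasure ρ σ
      = ρ.withDensity (fun x => (σ.rnDeriv (ρ + σ) x / ρ.rnDeriv (ρ + σ) x) ^ (1/2 : ℝ)) := by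
  rw [sqrtMeasure, withDensity_rpow_half_mul (Measure.measurable_rnDeriv _ _)
    (Measure.measurable_rnDeriv _ _) (Measure.rnDeriv_ne_top _ _),
    Measure.withDensity_rnDeriv_eq _ _ (Measure.AbsolutelyContinuous.rfl.add_right _)]

lemma sqrtMeasure_eq_withDensity_right :
    sqrtMeasure ρ σ
      = σ.withDensity (fun x => (ρ.rnDeriv (ρ + σ) x / σ.rnDeriv (ρ + σ) x) ^ (1/2 : ℝ)) := by
  simp_rw [sqrtMeasure, mul_comm (ρ.rnDeriv (ρ + σ) _)]
  rw [withDensity_rpow_half_mul (Measure.measurable_rnDeriv _ _)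
    (Measure.measurable_rnDeriv _ _) (Measure.rnDeriv_ne_top _ _),
    Measure.withDensity_rnDeriv_eq _ _ (Measure.AbsolutelyContinuous.rfl.add_right' _)]

lemma sqrtMeasure_le_add : sqrtMeasure ρ σ ≤ ρ + σ :=
  calc sqrtMeasure ρ σ ≤ (ρ + σ).withDensity (ρ.rnDeriv (ρ + σ) + σ.rnDeriv (ρ + σ)) :=
        withDensity_mono (ae_of_all _ fun x => ENNReal.rpow_half_mul_le_add _ _)
    _ = ρ + σ := by
        rw [withDensity_add_left (Measure.measurable_rnDeriv _ _),
          Measure.withDensity_rnDeriv_eq _ _ (Measure.AbsolutelyContinuous.rfl.add_right _),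
          Measure.withDensity_rnDeriv_eq _ _ (Measure.AbsolutelyContinuous.rfl.add_right' _)]

instance [IsFiniteMeasure ρ] [IsFiniteMeasure σ] : IsFiniteMeasure (sqrtMeasure ρ σ) :=
  isFiniteMeasure_of_le _ (sqrtMeasure_le_add ρ σ)

end SqrtMeasure

lemma withDensity_le_self_of_le_one {α : Type*} [MeasurableSpace α] (μ : Measure α)
    {f : α → ℝ≥0∞} (hf : ∀ x, f x ≤ 1) : μ.withDensity f ≤ μ :=
  (withDensity_mono (ae_of_all _ hf)).trans_eq withDensity_one

noncomputable def cosWeight {n : ℕ} (κ : ℝ) (p : Eucl n × Eucl n) : ℝ≥0∞ :=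
  ENNReal.ofReal (truncCos (dist p.1 p.2 / κ))

section Cost

variable {n : ℕ} {κ : ℝ}

@[fun_prop]
lemma measurable_cosWeight (κ : ℝ) : Measurable (cosWeight (n := n) κ) := by
  unfold cosWeight truncCos
  fun_prop

lemma cosWeight_le_one (p : Eucl n × Eucl n) : cosWeight κ p ≤ 1 :=
  ENNReal.ofReal_le_one.2 (Real.cos_le_one _)

instance (κ : ℝ) (ν : Measure (Eucl n × Eucl n)) [IsFiniteMeasure ν] :
    IsFiniteMeasure (ν.withDensity (cosWeight κ)) :=
  isFiniteMeasure_of_le _ (withDensity_le_self_of_le_one ν cosWeight_le_one)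

@[fun_prop]
lemma measurable_cHK (κ : ℝ) : Measurable (fun p : Eucl n × Eucl n => cHK κ p.1 p.2) := by
  unfold cHK
  refine Measurable.ite (measurableSet_lt (by fun_prop) measurable_const) (by fun_prop)
    measurable_const

lemma cosWeight_cHK_cases (hκ : 0 < κ) (p : Eucl n × Eucl n) :
    (cosWeight κ p = 0 ∧ cHK κ p.1 p.2 = ⊤) ∨ ∃ c : ℝ, 0 < c ∧ c ≤ 1 ∧
      cosWeight κ p = ENNReal.ofReal c ∧
      cHK κ p.1 p.2 = ENNReal.ofReal (-2 * κ ^ 2 * Real.log c) := by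
  have hd : 0 ≤ dist p.1 p.2 / κ := div_nonneg dist_nonneg hκ.le
  by_cases hlt : dist p.1 p.2 < κ * Real.pi / 2
  · have hlt' : dist p.1 p.2 / κ < Real.pi / 2 := by
      rw [div_lt_iff₀ hκ]; linarith
    refine Or.inr ⟨Real.cos (dist p.1 p.2 / κ),
      Real.cos_pos_of_mem_Ioo ⟨by linarith [Real.pi_pos], hlt'⟩, Real.cos_le_one _, ?_, if_pos hlt⟩
    rw [cosWeight, truncCos, abs_of_nonneg hd, min_eq_left hlt'.le]
  · have hge : Real.pi / 2 ≤ dist p.1 p.2 / κ := by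
      rw [le_div_iff₀ hκ]; linarith
    refine Or.inl ⟨?_, if_neg hlt⟩
    rw [cosWeight, truncCos, abs_of_nonneg hd, min_eq_right hge, Real.cos_pi_div_two,
      ENNReal.ofReal_zero]

end Cost

lemma sq_mul_klFun_add_sq_mul_klFun {x y c : ℝ} (hx : 0 < x) (hy : 0 < y) (hc : 0 < c) :
    x ^ 2 * klFun (y / x * c) + y ^ 2 * klFun (x / y * c)
      = x ^ 2 + y ^ 2 + 2 * (x * y * c) * (Real.log c - 1) := by
  simp only [klFun]
  rw [Real.log_mul (by positivity) hc.ne', Real.log_mul (by positivity) hc.ne',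
    Real.log_div hy.ne' hx.ne', Real.log_div hx.ne' hy.ne']
  field_simp
  ring

lemma ENNReal.ofReal_sq_rpow_half {x : ℝ} (hx : 0 ≤ x) :
    ENNReal.ofReal (x ^ 2) ^ (1/2 : ℝ) = ENNReal.ofReal x := by
  rw [ENNReal.ofReal_rpow_of_nonneg (sq_nonneg x) (by norm_num), ← Real.sqrt_eq_rpow,
    Real.sqrt_sq hx]

lemma cHK_balance {n : ℕ} {κ : ℝ} (hκ : 0 < κ) (p : Eucl n × Eucl n) {a b : ℝ≥0∞}
    (ha : a ≠ ∞) (hb : b ≠ ∞) :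
    (a * b) ^ (1/2 : ℝ) * cosWeight κ p * cHK κ p.1 p.2
      + ENNReal.ofReal (κ ^ 2) * (a * klFunENN ((b / a) ^ (1/2 : ℝ) * cosWeight κ p)
        + b * klFunENN ((a / b) ^ (1/2 : ℝ) * cosWeight κ p)
        + 2 * ((a * b) ^ (1/2 : ℝ) * cosWeight κ p))
      = ENNReal.ofReal (κ ^ 2) * (a + b) := by
  rcases eq_or_ne a 0 with rfl | ha0
  · simp [klFunENN, klFun_zero]
  rcases eq_or_ne b 0 with rfl | hb0
  · simp [klFunENN, klFun_zero]
  rcases cosWeight_cHK_cases hκ p with ⟨hC, -⟩ | ⟨c, hc0, hc1, hC, hcost⟩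
  · simp [hC, klFunENN, klFun_zero]
  obtain ⟨x, hx, rfl⟩ : ∃ x, 0 < x ∧ a = ENNReal.ofReal (x ^ 2) :=
    ⟨√a.toReal, Real.sqrt_pos.2 (ENNReal.toReal_pos ha0 ha),
      by rw [Real.sq_sqrt ENNReal.toReal_nonneg, ENNReal.ofReal_toReal ha]⟩
  obtain ⟨y, hy, rfl⟩ : ∃ y, 0 < y ∧ b = ENNReal.ofReal (y ^ 2) :=
    ⟨√b.toReal, Real.sqrt_pos.2 (ENNReal.toReal_pos hb0 hb),
      by rw [Real.sq_sqrt ENNReal.toReal_nonneg, ENNReal.ofReal_toReal hb]⟩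
  rw [hC, hcost, ← ENNReal.ofReal_mul (sq_nonneg x), ← mul_pow,
    ← ENNReal.ofReal_div_of_pos (by positivity), ← ENNReal.ofReal_div_of_pos (by positivity),
    ← div_pow, ← div_pow, ENNReal.ofReal_sq_rpow_half (by positivity),
    ENNReal.ofReal_sq_rpow_half (by positivity), ENNReal.ofReal_sq_rpow_half (by positivity),
    ← ENNReal.ofReal_mul (by positivity), ← ENNReal.ofReal_mul (by positivity),
    ← ENNReal.ofReal_mul (by positivity), ← ENNReal.ofReal_mul (by positivity), klFunENN, klFunENN,
    ENNReal.toReal_ofReal (by positivity), ENNReal.toReal_ofReal (by positivity)]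
  set F0 := klFun (y / x * c)
  set F1 := klFun (x / y * c)
  have hF0 : 0 ≤ F0 := klFun_nonneg (by positivity)
  have hF1 : 0 ≤ F1 := klFun_nonneg (by positivity)
  have hL : 0 ≤ -2 * κ ^ 2 * Real.log c := by
    have := Real.log_nonpos hc0.le hc1
    nlinarith [sq_nonneg κ]
  rw [← ENNReal.ofReal_mul (sq_nonneg x), ← ENNReal.ofReal_mul (sq_nonneg y),
    ← ENNReal.ofReal_ofNat 2, ← ENNReal.ofReal_mul zero_le_two,
    ← ENNReal.ofReal_add (by positivity) (by positivity),
    ← ENNReal.ofReal_add (by positivity) (by positivity), ← ENNReal.ofReal_mul (by positivity),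
    ← ENNReal.ofReal_add (by positivity) (by positivity),
    ← ENNReal.ofReal_add (by positivity) (by positivity), ← ENNReal.ofReal_mul (by positivity),
    sq_mul_klFun_add_sq_mul_klFun hx hy hc0]
  congr 1
  ring

lemma lintegral_cHK_balance {n : ℕ} {κ : ℝ} (hκ : 0 < κ) {τ : Measure (Eucl n × Eucl n)}
    {a b : Eucl n × Eucl n → ℝ≥0∞} (ha : Measurable a) (hb : Measurable b)
    (ha_ne_top : ∀ᵐ p ∂τ, a p ≠ ∞) (hb_ne_top : ∀ᵐ p ∂τ, b p ≠ ∞) :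
    ∫⁻ p, cHK κ p.1 p.2
        ∂(τ.withDensity fun p => (a p * b p) ^ (1/2 : ℝ)).withDensity (cosWeight κ)
      + ENNReal.ofReal (κ ^ 2) * ∫⁻ p, klFunENN ((b p / a p) ^ (1/2 : ℝ) * cosWeight κ p)
          ∂τ.withDensity a
      + ENNReal.ofReal (κ ^ 2) * ∫⁻ p, klFunENN ((a p / b p) ^ (1/2 : ℝ) * cosWeight κ p)
          ∂τ.withDensity b
      + ENNReal.ofReal (κ ^ 2) * (2 * ∫⁻ p, cosWeight κ p
          ∂τ.withDensity fun p => (a p * b p) ^ (1/2 : ℝ))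
      = ENNReal.ofReal (κ ^ 2) * ∫⁻ p, (a p + b p) ∂τ := by
  have hg : Measurable fun p => (a p * b p) ^ (1/2 : ℝ) := by fun_prop
  rw [← withDensity_mul _ hg (measurable_cosWeight κ),
    lintegral_withDensity_eq_lintegral_mul _ (hg.mul (measurable_cosWeight κ)) (measurable_cHK κ),
    lintegral_withDensity_eq_lintegral_mul _ ha (by fun_prop),
    lintegral_withDensity_eq_lintegral_mul _ hb (by fun_prop),
    lintegral_withDensity_eq_lintegral_mul _ hg (measurable_cosWeight κ),
    ← lintegral_const_mul (f := fun p => a p + b p) _ (by fun_prop)]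
  simp only [Pi.mul_apply]
  have hbalance := (ha_ne_top.and hb_ne_top).mono fun p hp => cHK_balance hκ p hp.1 hp.2
  rw [← lintegral_congr_ae hbalance,
    lintegral_add_left (by fun_prop), lintegral_const_mul _ (by fun_prop),
    lintegral_add_left (by fun_prop), lintegral_add_left (by fun_prop),
    lintegral_const_mul _ (by fun_prop)]
  ring

theorem HKfun_add_two_mul_lintegral_cosWeight_le {n : ℕ} {κ : ℝ} (hκ : 0 < κ)
    (γ0 γ1 : Measure (Eucl n × Eucl n)) [IsFiniteMeasure γ0] [IsFiniteMeasure γ1] :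
    HKfun κ ((sqrtMeasure γ0 γ1).withDensity (cosWeight κ)) γ0.fst γ1.snd
      + ENNReal.ofReal (κ ^ 2) * (2 * ∫⁻ p, cosWeight κ p ∂sqrtMeasure γ0 γ1)
      ≤ ENNReal.ofReal (κ ^ 2) * (γ0 Set.univ + γ1 Set.univ) := by
  set f0 := γ0.rnDeriv (γ0 + γ1)
  set f1 := γ1.rnDeriv (γ0 + γ1)
  set π := (sqrtMeasure γ0 γ1).withDensity (cosWeight κ) with hπ
  have hac0 : γ0 ≪ γ0 + γ1 := Measure.AbsolutelyContinuous.rfl.add_right _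
  have hac1 : γ1 ≪ γ0 + γ1 := Measure.AbsolutelyContinuous.rfl.add_right' _
  have hf0 : Measurable f0 := Measure.measurable_rnDeriv _ _
  have hf1 : Measurable f1 := Measure.measurable_rnDeriv _ _
  have hπ0 : γ0.withDensity (fun p => (f1 p / f0 p) ^ (1/2 : ℝ) * cosWeight κ p) = π := by
    rw [hπ, sqrtMeasure_eq_withDensity_left]
    exact withDensity_mul _ (by fun_prop) (measurable_cosWeight κ)
  have hπ1 : γ1.withDensity (fun p => (f0 p / f1 p) ^ (1/2 : ℝ) * cosWeight κ p) = π := by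
    rw [hπ, sqrtMeasure_eq_withDensity_right]
    exact withDensity_mul _ (by fun_prop) (measurable_cosWeight κ)
  have hfin : ∀ {ρ : Measure (Eucl n × Eucl n)} {u}, ρ.withDensity u = π → ∫⁻ p, u p ∂ρ ≠ ∞ :=
    fun h => by
      rw [← setLIntegral_univ, ← withDensity_apply _ MeasurableSet.univ, h]
      exact measure_ne_top _ _
  have hKL0 := hπ0 ▸ KLdiv_fst_withDensity_le γ0 (by fun_prop) (hfin hπ0)
  have hKL1 := hπ1 ▸ KLdiv_snd_withDensity_le γ1 (by fun_prop) (hfin hπ1)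
  have hbalance := lintegral_cHK_balance hκ hf0 hf1 (Measure.rnDeriv_ne_top _ _)
    (Measure.rnDeriv_ne_top _ _)
  rw [Measure.withDensity_rnDeriv_eq _ _ hac0, Measure.withDensity_rnDeriv_eq _ _ hac1,
    lintegral_add_left hf0, Measure.lintegral_rnDeriv hac0, Measure.lintegral_rnDeriv hac1]
    at hbalance
  -- `sqrtMeasure γ0 γ1` is by definition the `(γ0 + γ1)`-density form appearing in `hbalance`
  change ∫⁻ p, cHK κ p.1 p.2 ∂π + _ + _
    + ENNReal.ofReal (κ ^ 2) * (2 * ∫⁻ p, cosWeight κ p ∂sqrtMeasure γ0 γ1) = _ at hbalance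
  refine le_of_le_of_eq ?_ hbalance
  unfold HKfun
  gcongr
  exacts [hKL0, hKL1]

theorem hk_optimal_plan_from_semicouplings_general
    {n : ℕ} (κ : ℝ) (hκ : 0 < κ)
    (μ0 μ1 : Measure (Eucl n))
    -- `γ0`, `γ1` are optimal semi-couplings
    (γ0 γ1 : Measure (Eucl n × Eucl n)) [IsFiniteMeasure γ0] [IsFiniteMeasure γ1]
    (hγ0marg : γ0.map Prod.fst = μ0) (hγ1marg : γ1.map Prod.snd = μ1)
    (hγopt : ENNReal.ofReal (κ ^ 2) * (γ0 Set.univ + γ1 Set.univ)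
      = HK2 κ μ0 μ1 + ENNReal.ofReal (κ ^ 2)
        * (2 * ∫⁻ p, ENNReal.ofReal (truncCos (dist p.1 p.2 / κ)) ∂(sqrtMeasure γ0 γ1)))
    -- the plan `π := Cos(d/κ)·√(γ0 γ1)`
    (π : Measure (Eucl n × Eucl n))
    (hπ : π = (sqrtMeasure γ0 γ1).withDensity
      (fun p => ENNReal.ofReal (truncCos (dist p.1 p.2 / κ)))) :
    HKfun κ π μ0 μ1 = HK2 κ μ0 μ1 := by
  subst hπ hγ0marg hγ1marg
  have hfin : ∫⁻ p, cosWeight κ p ∂sqrtMeasure γ0 γ1 ≠ ∞ := by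
    simpa using measure_ne_top ((sqrtMeasure γ0 γ1).withDensity (cosWeight κ)) Set.univ
  refine le_antisymm ?_ (iInf₂_le _
    (inferInstance : IsFiniteMeasure ((sqrtMeasure γ0 γ1).withDensity (cosWeight κ))))
  have key := HKfun_add_two_mul_lintegral_cosWeight_le hκ γ0 γ1
  rw [hγopt] at key
  exact (ENNReal.add_le_add_iff_right (by finiteness)).1 key

/-- an optimal soft-marginal plan built from optimal semi-couplings. -/
theorem hk_optimal_plan_from_semicouplings
    {n : ℕ} (hn : 1 ≤ n) (κ : ℝ) (hκ : 0 < κ)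
    (μ0 μ1 : Measure (Eucl n)) [IsFiniteMeasure μ0] [IsFiniteMeasure μ1]
    (hμ0K : ∃ K : Set (Eucl n), IsCompact K ∧ μ0 Kᶜ = 0)
    (hμ1K : ∃ K : Set (Eucl n), IsCompact K ∧ μ1 Kᶜ = 0)
    -- `γ0`, `γ1` are optimal semi-couplings
    (γ0 γ1 : Measure (Eucl n × Eucl n)) [IsFiniteMeasure γ0] [IsFiniteMeasure γ1]
    (hγ0marg : γ0.map Prod.fst = μ0) (hγ1marg : γ1.map Prod.snd = μ1)
    (hγopt : ENNReal.ofReal (κ ^ 2) * (γ0 Set.univ + γ1 Set.univ)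
      = HK2 κ μ0 μ1 + ENNReal.ofReal (κ ^ 2)
        * (2 * ∫⁻ p, ENNReal.ofReal (truncCos (dist p.1 p.2 / κ)) ∂(sqrtMeasure γ0 γ1)))
    -- the plan `π := Cos(d/κ)·√(γ0 γ1)`
    (π : Measure (Eucl n × Eucl n))
    (hπ : π = (sqrtMeasure γ0 γ1).withDensity
      (fun p => ENNReal.ofReal (truncCos (dist p.1 p.2 / κ)))) :
    HKfun κ π μ0 μ1 = HK2 κ μ0 μ1 :=
  hk_optimal_plan_from_semicouplings_general κ hκ μ0 μ1 γ0 γ1 hγ0marg hγ1marg hγopt π hπ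
end

section
/- Let X be a metric space, κ > 0, and let Φ0, Φ1 : X → ℝ be Borel functions with Φ0, Φ1 ≤ κ² satisfying the extended constraint (1 − Φ0(x0)/κ²) ⊙ (1 − Φ1(x1)/κ²) ≥ Cos²(d(x0,x1)/κ) for all x0, x1 ∈ X, where Cos(s) = cos(min(|s|, π/2)) and ⊙ is the usual product with the convention 0 ⊙ (+∞) = +∞. Define the extended-real-valued log-c-transform Φ0^cone(x1) = −∞ if there exists x0 with d(x0,x1) < κπ/2 and Φ0(x0) = κ², and Φ0^cone(x1) = κ² · inf_{x0 : d(x0,x1) < κπ/2} ( 1 − Cos²(d(x0,x1)/κ)/(1 − Φ0(x0)/κ²) ) otherwise. Then Φ1(x1) ≤ Φ0^cone(x1) for every x1 ∈ X, Φ0^cone ≤ κ², and the pair (Φ0, Φ0^cone) also satisfies the constraint (1 − Φ0(x0)/κ²) ⊙ (1 − Φ0^cone(x1)/κ²) ≥ Cos²(d(x0,x1)/κ) for all x0, x1 ∈ X. -/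
open MeasureTheory ENNReal Filter Topology
open scoped Classical

noncomputable section

/-- The extended product `⊙`: the usual product on extended reals, except that
`0 ⊙ (+∞) = (+∞) ⊙ 0 = +∞`. -/
def odot (a b : EReal) : EReal :=
  if (a = 0 ∧ b = ⊤) ∨ (a = ⊤ ∧ b = 0) then ⊤ else a * b

/-- The log-c-transform `Φ0 ↦ Φ0^cone`. -/
def logCTransform {X : Type*} [MetricSpace X] (κ : ℝ) (Φ0 : X → ℝ) (x1 : X) : EReal :=
  if ∃ x0, dist x0 x1 < κ * Real.pi / 2 ∧ Φ0 x0 = κ ^ 2 then ⊥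
  else ((κ ^ 2 : ℝ) : EReal) * ⨅ (x0 : X) (_ : dist x0 x1 < κ * Real.pi / 2),
    ((1 - truncCos (dist x0 x1 / κ) ^ 2 / (1 - Φ0 x0 / κ ^ 2) : ℝ) : EReal)

end

/-!
On real arguments `⊙` is the ordinary product, so the constraint reads `Cos² ≤ a b` with
`a = 1 - Φ0(x0)/κ² ≥ 0` and `b = 1 - Φ1(x1)/κ²`. At distance `< κπ/2` we have `Cos > 0`, which
forces `a > 0`: the `−∞` branch never occurs and `Φ0^cone(x1)/κ²` is the infimum of `1 - Cos²/a`
over such `x0`. Each term is at least `1 - b` by the constraint and the term `x0 = x1` is at most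
`1`. Finally `1 - Φ0^cone(x1)/κ² ≥ Cos²/a` for every such `x0`, while farther points have `Cos = 0`.
-/

lemma odot_coe_coe (a b : ℝ) : odot a b = ((a * b : ℝ) : EReal) := by
  rw [odot, if_neg, EReal.coe_mul]
  rintro (⟨-, h⟩ | ⟨h, -⟩) <;> exact EReal.coe_ne_top _ h

lemma truncCos_div_pos {κ d : ℝ} (hκ : 0 < κ) (hd : 0 ≤ d) (h : d < κ * Real.pi / 2) :
    0 < truncCos (d / κ) := by
  have hlt : d / κ < Real.pi / 2 := by rw [div_lt_iff₀ hκ]; linarith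
  rw [truncCos, abs_of_nonneg (div_nonneg hd hκ.le), min_eq_left hlt.le]
  exact Real.cos_pos_of_mem_Ioo ⟨by linarith [div_nonneg hd hκ.le, Real.pi_pos], hlt⟩

lemma truncCos_div_eq_zero {κ d : ℝ} (hκ : 0 < κ) (hd : 0 ≤ d) (h : κ * Real.pi / 2 ≤ d) :
    truncCos (d / κ) = 0 := by
  have hle : Real.pi / 2 ≤ d / κ := by rw [le_div_iff₀ hκ]; linarith
  rw [truncCos, abs_of_nonneg (div_nonneg hd hκ.le), min_eq_right hle, Real.cos_pi_div_two]

section LogCTransform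

variable {X : Type*} [MetricSpace X] {κ : ℝ} {Φ0 : X → ℝ} {x0 x1 : X}

lemma logCTransform_le_of_dist_lt (hd : dist x0 x1 < κ * Real.pi / 2) :
    logCTransform κ Φ0 x1 ≤
      ((κ ^ 2 * (1 - truncCos (dist x0 x1 / κ) ^ 2 / (1 - Φ0 x0 / κ ^ 2)) : ℝ) : EReal) := by
  rw [logCTransform]
  split_ifs
  · exact bot_le
  · rw [EReal.coe_mul]
    exact mul_le_mul_of_nonneg_left (iInf₂_le x0 hd) (EReal.coe_nonneg.2 (sq_nonneg κ))

lemma logCTransform_le_sq (hκ : 0 < κ) (ha0 : 0 ≤ 1 - Φ0 x1 / κ ^ 2) :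
    logCTransform κ Φ0 x1 ≤ ((κ ^ 2 : ℝ) : EReal) :=
  (logCTransform_le_of_dist_lt (x0 := x1) (by rw [dist_self]; positivity)).trans <|
    EReal.coe_le_coe_iff.2 <| mul_le_of_le_one_right (sq_nonneg κ) <|
      sub_le_self _ (div_nonneg (sq_nonneg _) ha0)

lemma coe_le_logCTransform {y : ℝ} (hκ : 0 < κ)
    (h : ∀ x0, dist x0 x1 < κ * Real.pi / 2 → 0 < 1 - Φ0 x0 / κ ^ 2 ∧
      truncCos (dist x0 x1 / κ) ^ 2 ≤ (1 - Φ0 x0 / κ ^ 2) * (1 - y / κ ^ 2)) :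
    (y : EReal) ≤ logCTransform κ Φ0 x1 := by
  have hκ2 : 0 < κ ^ 2 := by positivity
  have hne : ¬ ∃ x0, dist x0 x1 < κ * Real.pi / 2 ∧ Φ0 x0 = κ ^ 2 := fun ⟨x0, hd, hΦ⟩ => by
    simpa [hΦ, hκ2.ne'] using (h x0 hd).1
  rw [logCTransform, if_neg hne, ← mul_div_cancel₀ y hκ2.ne', EReal.coe_mul]
  refine mul_le_mul_of_nonneg_left (le_iInf₂ fun x0 hd => ?_) (EReal.coe_nonneg.2 hκ2.le)
  obtain ⟨ha, hC⟩ := h x0 hd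
  rw [EReal.coe_le_coe_iff, le_sub_comm, div_le_iff₀' ha]
  exact hC

lemma truncCos_sq_le_mul_of_logCTransform_eq {t : ℝ} (hκ : 0 < κ)
    (ht : logCTransform κ Φ0 x1 = t) (htκ : t ≤ κ ^ 2) (ha0 : 0 ≤ 1 - Φ0 x0 / κ ^ 2)
    (ha : dist x0 x1 < κ * Real.pi / 2 → 0 < 1 - Φ0 x0 / κ ^ 2) :
    truncCos (dist x0 x1 / κ) ^ 2 ≤ (1 - Φ0 x0 / κ ^ 2) * (1 - t * (κ ^ 2)⁻¹) := by
  have hκ2 : 0 < κ ^ 2 := by positivity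
  rw [← div_eq_mul_inv]
  by_cases hd : dist x0 x1 < κ * Real.pi / 2
  · have hle := logCTransform_le_of_dist_lt (Φ0 := Φ0) hd
    rw [ht, EReal.coe_le_coe_iff, ← div_le_iff₀' hκ2] at hle
    rw [← div_le_iff₀' (ha hd)]
    linarith
  · rw [truncCos_div_eq_zero hκ dist_nonneg (not_lt.1 hd), sq, zero_mul]
    exact mul_nonneg ha0 (sub_nonneg.2 ((div_le_one hκ2).2 htκ))

end LogCTransform

theorem logCTransform_feasible_general
    {X : Type*} [MetricSpace X]
    (κ : ℝ) (hκ : 0 < κ) (Φ0 Φ1 : X → ℝ)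
    (hΦ0le : ∀ x, Φ0 x ≤ κ ^ 2)
    (hfeas : ∀ x0 x1 : X, ((truncCos (dist x0 x1 / κ) ^ 2 : ℝ) : EReal) ≤
      odot ((1 - Φ0 x0 / κ ^ 2 : ℝ) : EReal) ((1 - Φ1 x1 / κ ^ 2 : ℝ) : EReal)) :
    (∀ x1 : X, (Φ1 x1 : EReal) ≤ logCTransform κ Φ0 x1) ∧
    (∀ x1 : X, logCTransform κ Φ0 x1 ≤ ((κ ^ 2 : ℝ) : EReal)) ∧
    (∀ x0 x1 : X, ((truncCos (dist x0 x1 / κ) ^ 2 : ℝ) : EReal) ≤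
      odot ((1 - Φ0 x0 / κ ^ 2 : ℝ) : EReal)
        (1 - logCTransform κ Φ0 x1 * (((κ ^ 2)⁻¹ : ℝ) : EReal))) := by
  have hκ2 : 0 < κ ^ 2 := by positivity
  have hfeasR : ∀ x0 x1, truncCos (dist x0 x1 / κ) ^ 2 ≤
      (1 - Φ0 x0 / κ ^ 2) * (1 - Φ1 x1 / κ ^ 2) := fun x0 x1 => by
    simpa only [odot_coe_coe, EReal.coe_le_coe_iff] using hfeas x0 x1
  have ha0 : ∀ x0, 0 ≤ 1 - Φ0 x0 / κ ^ 2 := fun x0 =>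
    sub_nonneg.2 ((div_le_one hκ2).2 (hΦ0le x0))
  have ha : ∀ x0 x1, dist x0 x1 < κ * Real.pi / 2 → 0 < 1 - Φ0 x0 / κ ^ 2 :=
    fun x0 x1 hd => (ha0 x0).lt_of_ne' fun h0 => by
      have h := hfeasR x0 x1
      rw [h0, zero_mul] at h
      exact (pow_pos (truncCos_div_pos hκ dist_nonneg hd) 2).not_ge h
  have hlow : ∀ x1, (Φ1 x1 : EReal) ≤ logCTransform κ Φ0 x1 := fun x1 =>
    coe_le_logCTransform hκ fun x0 hd => ⟨ha x0 x1 hd, hfeasR x0 x1⟩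
  have hup : ∀ x1, logCTransform κ Φ0 x1 ≤ ((κ ^ 2 : ℝ) : EReal) := fun x1 =>
    logCTransform_le_sq hκ (ha0 x1)
  refine ⟨hlow, hup, fun x0 x1 => ?_⟩
  obtain ⟨t, ht⟩ : ∃ t : ℝ, logCTransform κ Φ0 x1 = t :=
    ⟨_, (EReal.coe_toReal (ne_top_of_le_ne_top (EReal.coe_ne_top _) (hup x1))
      (ne_bot_of_le_ne_bot (EReal.coe_ne_bot _) (hlow x1))).symm⟩
  rw [ht, ← EReal.coe_mul, ← EReal.coe_one, ← EReal.coe_sub, odot_coe_coe,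
    EReal.coe_le_coe_iff]
  exact truncCos_sq_le_mul_of_logCTransform_eq hκ ht (EReal.coe_le_coe_iff.1 (ht ▸ hup x1))
    (ha0 x0) (ha x0 x1)

/-- properties of the log-c-transform. -/
theorem logCTransform_feasible
    {X : Type*} [MetricSpace X] [MeasurableSpace X] [BorelSpace X]
    (κ : ℝ) (hκ : 0 < κ) (Φ0 Φ1 : X → ℝ)
    (hΦ0m : Measurable Φ0) (hΦ1m : Measurable Φ1)
    (hΦ0le : ∀ x, Φ0 x ≤ κ ^ 2) (hΦ1le : ∀ x, Φ1 x ≤ κ ^ 2)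
    (hfeas : ∀ x0 x1 : X, ((truncCos (dist x0 x1 / κ) ^ 2 : ℝ) : EReal) ≤
      odot ((1 - Φ0 x0 / κ ^ 2 : ℝ) : EReal) ((1 - Φ1 x1 / κ ^ 2 : ℝ) : EReal)) :
    (∀ x1 : X, (Φ1 x1 : EReal) ≤ logCTransform κ Φ0 x1) ∧
    (∀ x1 : X, logCTransform κ Φ0 x1 ≤ ((κ ^ 2 : ℝ) : EReal)) ∧
    (∀ x0 x1 : X, ((truncCos (dist x0 x1 / κ) ^ 2 : ℝ) : EReal) ≤
      odot ((1 - Φ0 x0 / κ ^ 2 : ℝ) : EReal)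
        (1 - logCTransform κ Φ0 x1 * (((κ ^ 2)⁻¹ : ℝ) : EReal))) :=
  logCTransform_feasible_general κ hκ Φ0 Φ1 hΦ0le hfeas
end
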